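/- arXiv:2505.01082 — 4 statements merged into one kernel-verified Lean document; each statement's English description precedes it below -/
import Mathlib

section
/- Let t ∈ ℝ and let y ∈ K(w) with 0 < |supp(y)| < k. Then (∅, {1,…,d} ∖ supp(y), supp(y)) is a minimal valid SCG-tuple with threshold t. -/
open Finset

/-- Support of a vector, as a finset. -/
noncomputable def suppF {d : ℕ} (x : Fin d → ℝ) : Finset (Fin d) :=
  Finset.univ.filter fun i => x i ≠ 0

/-- The sum of the `k` first (= `k` largest, since `w` is strictly decreasing)
entries of `w`, i.e. `∑_{j=1}^k w_[j] = ∑_{j=1}^k w_j`. -/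
noncomputable def topSum (d k : ℕ) (w : Fin d → ℝ) : ℝ :=
  ∑ i ∈ Finset.univ.filter (fun i : Fin d => (i : ℕ) < k), w i

/-- The `k`-cardinality binary knapsack set
`K(w) := {x ∈ {0,1}^d : ∑ w_i x_i < c(w), |supp x| ≤ k}` with
`c(w) := ∑_{i=1}^k w_i − t`. -/
def Kset (d k : ℕ) (w : Fin d → ℝ) (t : ℝ) : Set (Fin d → ℝ) :=
  {x | (∀ i, x i = 0 ∨ x i = 1) ∧
       ∑ i, w i * x i < topSum d k w - t ∧
       (suppF x).card ≤ k}

/-- A valid SCG-tuple with threshold `t` (for strictly decreasing `w`, where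
`w_[j] = w_j`): (1) `S, N, C` pairwise disjoint with
`|C| = min (k − |S|) (d − |N| − |S|)`; (2) if `C ≠ ∅` then every index `i` with
`w i ≥ min_{j∈C} w j` lies in `S ∪ N ∪ C`; (3) `∑_{j=1}^k w_[j] − ∑_S w − ∑_C w > t`. -/
def ValidSCG (d k : ℕ) (w : Fin d → ℝ) (t : ℝ) (S N C : Finset (Fin d)) : Prop :=
  (Disjoint S N ∧ Disjoint S C ∧ Disjoint N C) ∧
  C.card = min (k - S.card) (d - N.card - S.card) ∧
  (∀ (hC : C.Nonempty), ∀ i, C.inf' hC w ≤ w i → i ∈ S ∪ N ∪ C) ∧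
  topSum d k w - ∑ i ∈ S, w i - ∑ i ∈ C, w i > t

/-- A minimal SCG-tuple. -/
def MinimalSCG (d k : ℕ) (w : Fin d → ℝ) (t : ℝ) (S N C : Finset (Fin d)) : Prop :=
  ValidSCG d k w t S N C ∧
  (N = ∅ ∨ ∀ i ∈ N, ¬ ValidSCG d k w t S (N.erase i) C) ∧
  (S = ∅ ∨ ∀ i ∈ S, ¬ ValidSCG d k w t (S.erase i) N (insert i C))

theorem stmt_10 (d k : ℕ) (hk1 : 1 ≤ k) (hkd : k ≤ d)
    (w : Fin d → ℝ) (hw : StrictAnti w) (t : ℝ)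
    (y : Fin d → ℝ) (hy : y ∈ Kset d k w t)
    (h0 : 0 < (suppF y).card) (hlt : (suppF y).card < k) :
    MinimalSCG d k w t ∅ (Finset.univ \ suppF y) (suppF y) := by
  obtain ⟨hy01, hylt, hyk⟩ := hy
  set C := suppF y with hC
  have hCd : C.card ≤ d := by
    simpa using Finset.card_le_univ C
  have hNcard : (Finset.univ \ C).card = d - C.card := by
    rw [Finset.card_sdiff_of_subset (Finset.subset_univ _)]
    simp
  have hsum : ∑ i, w i * y i = ∑ i ∈ C, w i := by
    rw [← Finset.sum_subset (Finset.subset_univ C)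
      (fun i _ hi => by
        have : y i = 0 := by
          by_contra h
          exact hi (by simp [hC, suppF, h])
        simp [this])]
    refine Finset.sum_congr rfl (fun i hi => ?_)
    have hne : y i ≠ 0 := by simpa [hC, suppF] using hi
    rcases hy01 i with h | h
    · exact absurd h hne
    · simp [h]
  refine ⟨⟨⟨by simp, by simp, Finset.sdiff_disjoint⟩, ?_, ?_, ?_⟩, ?_, Or.inl rfl⟩
  · simp only [Finset.card_empty, Nat.sub_zero, hNcard]
    omega
  · intro hCne i _
    simp [Finset.mem_union]
  · simp only [Finset.sum_empty, sub_zero]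
    linarith [hylt, hsum.symm.le]
  · refine Or.inr (fun i hi hval => ?_)
    obtain ⟨_, hcard, _, _⟩ := hval
    rw [Finset.card_erase_of_mem hi, hNcard] at hcard
    simp only [Finset.card_empty, Nat.sub_zero] at hcard
    omega
end

section
/- Let t ∈ ℝ and let y ∈ K(w) with |supp(y)| = k, with minimum consecutive partitions supp(y) = A_1 ∪ ⋯ ∪ A_m and comp(supp(y)) = B_1 ∪ ⋯ ∪ B_m. Then for every ℓ ∈ {1,…,m−1}, the triple (⋃_{j=ℓ+1}^m A_j, ⋃_{j=1}^ℓ B_j, ⋃_{j=1}^ℓ A_j) is a minimal valid SCG-tuple with threshold t. -/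
open Finset

/-- For a strictly antitone function, the `inf'` over a finset is attained at
the maximal element. -/
lemma inf'_eq_apply_max' {d : ℕ} {w : Fin d → ℝ} (hw : StrictAnti w)
    (C : Finset (Fin d)) (hC : C.Nonempty) : C.inf' hC w = w (C.max' hC) :=
  le_antisymm (Finset.inf'_le _ (C.max'_mem hC))
    (Finset.le_inf' _ _ fun i hi => hw.antitone (C.le_max' i hi))

theorem stmt_11 (d k : ℕ) (hk1 : 1 ≤ k) (hkd : k ≤ d)
    (w : Fin d → ℝ) (hw : StrictAnti w) (t : ℝ)
    (y : Fin d → ℝ) (hy : y ∈ Kset d k w t) (hcard : (suppF y).card = k)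
    -- `A 1, …, A m` is the minimum consecutive partition of `supp y`:
    (m : ℕ) (hm : 1 ≤ m) (A B : ℕ → Finset (Fin d))
    (hAunion : suppF y = (Finset.Icc 1 m).biUnion A)
    (hAne : ∀ j ∈ Finset.Icc 1 m, (A j).Nonempty)
    (hAcons : ∀ j ∈ Finset.Icc 1 m, ∀ a ∈ A j, ∀ b ∈ A j,
      ∀ l : Fin d, a ≤ l → l ≤ b → l ∈ A j)
    (hgap : ∀ j, 1 ≤ j → j + 1 ≤ m → ∀ a ∈ A j, ∀ b ∈ A (j + 1),
      (a : ℕ) + 1 < (b : ℕ))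
    -- `B 1, …, B m` is the corresponding partition of `comp (supp y)` into gaps:
    (hB1 : B 1 = Finset.univ.filter fun i => ∀ b ∈ A 1, i < b)
    (hB : ∀ j, 2 ≤ j → j ≤ m →
      B j = Finset.univ.filter fun i => (∀ a ∈ A (j - 1), a < i) ∧ ∀ b ∈ A j, i < b) :
    ∀ ℓ, 1 ≤ ℓ → ℓ ≤ m - 1 →
      MinimalSCG d k w t ((Finset.Icc (ℓ + 1) m).biUnion A)
        ((Finset.Icc 1 ℓ).biUnion B) ((Finset.Icc 1 ℓ).biUnion A) := by
  intro ℓ hℓ1 hℓm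
  obtain ⟨hy01, hysum, hyk⟩ := hy
  have hℓm' : ℓ + 1 ≤ m := by omega
  -- ordering of distinct runs
  have ordN : ∀ n j, 1 ≤ j → j + n + 1 ≤ m → ∀ a ∈ A j, ∀ b ∈ A (j + n + 1),
      (a : ℕ) < (b : ℕ) := by
    intro n
    induction n with
    | zero =>
      intro j h1 hle a ha b hb
      have := hgap j h1 hle a ha b hb
      omega
    | succ n ih =>
      intro j h1 hle a ha b hb
      obtain ⟨c, hc⟩ := hAne (j + n + 1) (Finset.mem_Icc.2 ⟨by omega, by omega⟩)
      have h2 := ih j h1 (by omega) a ha c hc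
      have e : j + (n + 1) + 1 = (j + n + 1) + 1 := by ring
      rw [e] at hb
      have h3 := hgap (j + n + 1) (by omega) (by omega) c hc b hb
      omega
  have ordlt : ∀ j j', 1 ≤ j → j < j' → j' ≤ m → ∀ a ∈ A j, ∀ b ∈ A j',
      (a : ℕ) < (b : ℕ) := by
    intro j j' h1 hlt hle a ha b hb
    have e : j' = j + (j' - j - 1) + 1 := by omega
    rw [e] at hb
    exact ordN (j' - j - 1) j h1 (by omega) a ha b hb
  -- membership in biUnions over Icc
  have hmemBU : ∀ (p q : ℕ) (F : ℕ → Finset (Fin d)) (i : Fin d),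
      i ∈ (Finset.Icc p q).biUnion F ↔ ∃ j, (p ≤ j ∧ j ≤ q) ∧ i ∈ F j := by
    intro p q F i
    constructor
    · intro h
      obtain ⟨j, hj, hij⟩ := Finset.mem_biUnion.1 h
      exact ⟨j, Finset.mem_Icc.1 hj, hij⟩
    · rintro ⟨j, hj, hij⟩
      exact Finset.mem_biUnion.2 ⟨j, Finset.mem_Icc.2 hj, hij⟩
  have hsuppA : ∀ i : Fin d, i ∈ suppF y ↔ ∃ j, (1 ≤ j ∧ j ≤ m) ∧ i ∈ A j := by
    intro i; rw [hAunion]; exact hmemBU 1 m A i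
  -- facts about B
  have hBlt : ∀ j, 1 ≤ j → j ≤ m → ∀ i ∈ B j, ∀ b ∈ A j, (i : ℕ) < (b : ℕ) := by
    intro j h1 h2 i hi b hb
    rcases eq_or_lt_of_le h1 with h | h
    · rw [← h] at hb hi
      rw [hB1] at hi
      exact Fin.lt_def.1 ((Finset.mem_filter.1 hi).2 b hb)
    · rw [hB j (by omega) h2] at hi
      exact Fin.lt_def.1 ((Finset.mem_filter.1 hi).2.2 b hb)
  have hBgt : ∀ j, 2 ≤ j → j ≤ m → ∀ i ∈ B j, ∀ a ∈ A (j - 1), (a : ℕ) < (i : ℕ) := by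
    intro j h1 h2 i hi a ha
    rw [hB j h1 h2] at hi
    exact Fin.lt_def.1 ((Finset.mem_filter.1 hi).2.1 a ha)
  have hBsupp : ∀ j, 1 ≤ j → j ≤ m → ∀ i ∈ B j, i ∉ suppF y := by
    intro j h1 h2 i hi hsupp
    obtain ⟨j'', ⟨hj1, hj2⟩, hij⟩ := (hsuppA i).1 hsupp
    have hlt := hBlt j h1 h2 i hi
    rcases lt_trichotomy j'' j with h | h | h
    · -- j'' < j, so j ≥ 2
      have hgt := hBgt j (by omega) h2 i hi
      rcases eq_or_lt_of_le (show j'' ≤ j - 1 by omega) with h' | h'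
      · rw [h'] at hij
        have := hgt i hij
        omega
      · obtain ⟨a0, ha0⟩ := hAne (j - 1) (Finset.mem_Icc.2 ⟨by omega, by omega⟩)
        have e1 := ordlt j'' (j - 1) hj1 h' (by omega) i hij a0 ha0
        have e2 := hgt a0 ha0
        omega
    · rw [h] at hij
      have := hlt i hij
      omega
    · obtain ⟨b0, hb0⟩ := hAne j (Finset.mem_Icc.2 ⟨h1, h2⟩)
      have e1 := ordlt j j'' h1 h hj2 b0 hb0 i hij
      have e2 := hlt b0 hb0
      omega
  set S : Finset (Fin d) := (Finset.Icc (ℓ + 1) m).biUnion A with hSdef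
  set N : Finset (Fin d) := (Finset.Icc 1 ℓ).biUnion B with hNdef
  set C : Finset (Fin d) := (Finset.Icc 1 ℓ).biUnion A with hCdef
  have hmemS : ∀ i : Fin d, i ∈ S ↔ ∃ j, (ℓ + 1 ≤ j ∧ j ≤ m) ∧ i ∈ A j :=
    hmemBU (ℓ + 1) m A
  have hmemN : ∀ i : Fin d, i ∈ N ↔ ∃ j, (1 ≤ j ∧ j ≤ ℓ) ∧ i ∈ B j :=
    hmemBU 1 ℓ B
  have hmemC : ∀ i : Fin d, i ∈ C ↔ ∃ j, (1 ≤ j ∧ j ≤ ℓ) ∧ i ∈ A j :=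
    hmemBU 1 ℓ A
  have hSsub : S ⊆ suppF y := by
    intro i hi
    obtain ⟨j, ⟨h1, h2⟩, hij⟩ := (hmemS i).1 hi
    exact (hsuppA i).2 ⟨j, ⟨by omega, h2⟩, hij⟩
  have hCsub : C ⊆ suppF y := by
    intro i hi
    obtain ⟨j, ⟨h1, h2⟩, hij⟩ := (hmemC i).1 hi
    exact (hsuppA i).2 ⟨j, ⟨h1, by omega⟩, hij⟩
  have hNsupp : ∀ i ∈ N, i ∉ suppF y := by
    intro i hi
    obtain ⟨j, ⟨h1, h2⟩, hij⟩ := (hmemN i).1 hi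
    exact hBsupp j h1 (by omega) i hij
  -- disjointness
  have hSC : Disjoint S C := by
    rw [Finset.disjoint_left]
    intro i hiS hiC
    obtain ⟨j, ⟨hj1, hj2⟩, hij⟩ := (hmemS i).1 hiS
    obtain ⟨j', ⟨hj1', hj2'⟩, hij'⟩ := (hmemC i).1 hiC
    have := ordlt j' j hj1' (by omega) hj2 i hij' i hij
    omega
  have hSN : Disjoint S N := by
    rw [Finset.disjoint_left]
    intro i hiS hiN
    exact hNsupp i hiN (hSsub hiS)
  have hNC : Disjoint N C := by
    rw [Finset.disjoint_left]
    intro i hiN hiC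
    exact hNsupp i hiN (hCsub hiC)
  -- cardinalities
  have hsplit : suppF y = C ∪ S := by
    rw [hAunion, hCdef, hSdef]
    have hIcc : Finset.Icc 1 m = Finset.Icc 1 ℓ ∪ Finset.Icc (ℓ + 1) m := by
      ext x
      simp only [Finset.mem_Icc, Finset.mem_union]
      omega
    rw [hIcc]
    ext x
    simp only [Finset.mem_biUnion, Finset.mem_union]
    constructor
    · rintro ⟨j, hj | hj, hx⟩
      · exact Or.inl ⟨j, hj, hx⟩
      · exact Or.inr ⟨j, hj, hx⟩
    · rintro (⟨j, hj, hx⟩ | ⟨j, hj, hx⟩)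
      · exact ⟨j, Or.inl hj, hx⟩
      · exact ⟨j, Or.inr hj, hx⟩
  have hcardSC : C.card + S.card = k := by
    rw [← hcard, hsplit, Finset.card_union_of_disjoint hSC.symm]
  have hNdisj : Disjoint N (suppF y) := by
    rw [Finset.disjoint_left]
    intro i hiN hiS
    exact hNsupp i hiN hiS
  have hcardN : N.card + k ≤ d := by
    have h1 : (N ∪ suppF y).card = N.card + (suppF y).card :=
      Finset.card_union_of_disjoint hNdisj
    have h2 : (N ∪ suppF y).card ≤ d := by
      calc (N ∪ suppF y).card ≤ (Finset.univ : Finset (Fin d)).card :=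
            Finset.card_le_univ _
        _ = d := by simp
    omega
  have hcardcond : C.card = min (k - S.card) (d - N.card - S.card) := by omega
  -- sums
  have hmem_supp : ∀ i : Fin d, i ∈ suppF y ↔ y i ≠ 0 := by
    intro i; simp [suppF]
  have hsum_supp : ∑ i ∈ suppF y, w i = ∑ i, w i * y i := by
    calc ∑ i ∈ suppF y, w i = ∑ i ∈ suppF y, w i * y i := by
          refine Finset.sum_congr rfl (fun i hi => ?_)
          rcases hy01 i with h | h
          · exact absurd h ((hmem_supp i).1 hi)
          · rw [h, mul_one]
      _ = ∑ i, w i * y i := by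
          refine Finset.sum_subset (Finset.subset_univ _) (fun i _ hni => ?_)
          have h0 : y i = 0 := not_not.1 (fun h => hni ((hmem_supp i).2 h))
          rw [h0, mul_zero]
  have hsum3 : topSum d k w - ∑ i ∈ S, w i - ∑ i ∈ C, w i > t := by
    have e : ∑ i ∈ C, w i + ∑ i ∈ S, w i = ∑ i ∈ suppF y, w i := by
      rw [hsplit, Finset.sum_union hSC.symm]
    rw [hsum_supp] at e
    linarith
  -- nonemptiness
  have hAℓne : (A ℓ).Nonempty := hAne ℓ (Finset.mem_Icc.2 ⟨hℓ1, by omega⟩)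
  have hCne : C.Nonempty := by
    obtain ⟨a0, ha0⟩ := hAℓne
    exact ⟨a0, (hmemC a0).2 ⟨ℓ, ⟨hℓ1, le_rfl⟩, ha0⟩⟩
  -- cover lemma
  have cover : ∀ i : Fin d, i ∉ suppF y → (∃ b ∈ A ℓ, (i : ℕ) < (b : ℕ)) →
      ∃ j, (1 ≤ j ∧ j ≤ ℓ) ∧ i ∈ B j := by
    rintro i hns ⟨b, hb, hib⟩
    classical
    set T := (Finset.Icc 1 ℓ).filter (fun j => ∃ b ∈ A j, (i : ℕ) < (b : ℕ)) with hT
    have hTne : T.Nonempty :=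
      ⟨ℓ, Finset.mem_filter.2 ⟨Finset.mem_Icc.2 ⟨hℓ1, le_rfl⟩, b, hb, hib⟩⟩
    set j := T.min' hTne with hjdef
    have hjT := T.min'_mem hTne
    obtain ⟨hjIcc, b', hb', hib'⟩ := Finset.mem_filter.1 hjT
    have hj1 : 1 ≤ j := (Finset.mem_Icc.1 hjIcc).1
    have hjℓ : j ≤ ℓ := (Finset.mem_Icc.1 hjIcc).2
    have hall : ∀ b'' ∈ A j, (i : ℕ) < (b'' : ℕ) := by
      intro b'' hb''
      by_contra hle
      push_neg at hle
      have hiA : i ∈ A j := by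
        refine hAcons j (Finset.mem_Icc.2 ⟨hj1, by omega⟩) b'' hb'' b' hb' i ?_ ?_
        · exact Fin.le_def.2 hle
        · exact Fin.le_def.2 (by omega)
      exact hns ((hsuppA i).2 ⟨j, ⟨hj1, by omega⟩, hiA⟩)
    refine ⟨j, ⟨hj1, hjℓ⟩, ?_⟩
    rcases eq_or_lt_of_le hj1 with h | h
    · rw [← h, hB1]
      refine Finset.mem_filter.2 ⟨Finset.mem_univ _, fun b'' hb'' => ?_⟩
      rw [h] at hb''
      exact Fin.lt_def.2 (hall b'' hb'')
    · rw [hB j (by omega) (by omega)]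
      refine Finset.mem_filter.2 ⟨Finset.mem_univ _, ⟨fun a ha => ?_, fun b'' hb'' =>
        Fin.lt_def.2 (hall b'' hb'')⟩⟩
      by_contra hle
      push_neg at hle
      have hia : (i : ℕ) < (a : ℕ) := by
        have hne : (i : ℕ) ≠ (a : ℕ) := by
          intro he
          apply hns
          refine (hsuppA i).2 ⟨j - 1, ⟨by omega, by omega⟩, ?_⟩
          have : i = a := Fin.ext he
          rwa [this]
        have := Fin.le_def.1 hle
        omega
      have hj1T : j - 1 ∈ T :=
        Finset.mem_filter.2 ⟨Finset.mem_Icc.2 ⟨by omega, by omega⟩, a, ha, hia⟩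
      have := T.min'_le _ hj1T
      omega
  -- condition (2)
  have cond2 : ∀ (hC : C.Nonempty), ∀ i, C.inf' hC w ≤ w i → i ∈ S ∪ N ∪ C := by
    intro hCne' i hle
    rw [inf'_eq_apply_max' hw C hCne'] at hle
    have hile : i ≤ C.max' hCne' := hw.le_iff_ge.1 hle
    set M := C.max' hCne' with hMdef
    have hMC : M ∈ C := C.max'_mem hCne'
    obtain ⟨j0, ⟨hj01, hj0ℓ⟩, hMj0⟩ := (hmemC M).1 hMC
    obtain ⟨a0, ha0⟩ := hAℓne
    have hMℓ : M ∈ A ℓ := by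
      rcases eq_or_lt_of_le hj0ℓ with h | h
      · rwa [h] at hMj0
      · exfalso
        have h1 := ordlt j0 ℓ hj01 h (by omega) M hMj0 a0 ha0
        have h2 : a0 ≤ M := C.le_max' a0 ((hmemC a0).2 ⟨ℓ, ⟨hℓ1, le_rfl⟩, ha0⟩)
        have := Fin.le_def.1 h2
        omega
    by_cases hs : i ∈ suppF y
    · obtain ⟨j, ⟨hj1, hjm⟩, hij⟩ := (hsuppA i).1 hs
      rcases le_or_gt j ℓ with h | h
      · exact Finset.mem_union_right _ ((hmemC i).2 ⟨j, ⟨hj1, h⟩, hij⟩)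
      · exfalso
        have h1 := ordlt ℓ j hℓ1 h hjm M hMℓ i hij
        have := Fin.le_def.1 hile
        omega
    · rcases eq_or_lt_of_le hile with h | h
      · exact absurd (hCsub (h ▸ hMC)) hs
      · obtain ⟨j, hj, hiB⟩ := cover i hs ⟨M, hMℓ, Fin.lt_def.1 h⟩
        exact Finset.mem_union_left _ (Finset.mem_union_right _ ((hmemN i).2 ⟨j, hj, hiB⟩))
  refine ⟨⟨⟨hSN, hSC, hNC⟩, hcardcond, cond2, hsum3⟩, Or.inr ?_, Or.inr ?_⟩
  -- minimality in N
  · intro i hiN hval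
    obtain ⟨j, ⟨hj1, hjℓ⟩, hiB⟩ := (hmemN i).1 hiN
    have hjm : j ≤ m := by omega
    have hins : i ∉ suppF y := hBsupp j hj1 hjm i hiB
    obtain ⟨b0, hb0⟩ := hAne j (Finset.mem_Icc.2 ⟨hj1, hjm⟩)
    have hib0 : (i : ℕ) < (b0 : ℕ) := hBlt j hj1 hjm i hiB b0 hb0
    have hb0C : b0 ∈ C := (hmemC b0).2 ⟨j, ⟨hj1, hjℓ⟩, hb0⟩
    have hle : C.inf' hCne w ≤ w i :=
      le_trans (Finset.inf'_le w hb0C) (hw.antitone (le_of_lt (Fin.lt_def.2 hib0)))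
    have hmem := hval.2.2.1 hCne i hle
    rcases Finset.mem_union.1 hmem with h | h
    · rcases Finset.mem_union.1 h with h' | h'
      · exact hins (hSsub h')
      · exact Finset.notMem_erase i N h'
    · exact hins (hCsub h)
  -- minimality in S
  · intro i hiS hval
    obtain ⟨j, ⟨hjℓ1, hjm⟩, hij⟩ := (hmemS i).1 hiS
    have hAℓ1ne : (A (ℓ + 1)).Nonempty := hAne (ℓ + 1) (Finset.mem_Icc.2 ⟨by omega, hℓm'⟩)
    set a := (A ℓ).max' hAℓne with hadef
    set b := (A (ℓ + 1)).min' hAℓ1ne with hbdef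
    have hamem := (A ℓ).max'_mem hAℓne
    have hbmem := (A (ℓ + 1)).min'_mem hAℓ1ne
    have hab : (a : ℕ) + 1 < (b : ℕ) := hgap ℓ hℓ1 hℓm' a hamem b hbmem
    have hbd : (b : ℕ) < d := b.isLt
    set g : Fin d := ⟨(a : ℕ) + 1, by omega⟩ with hgdef
    have hgval : (g : ℕ) = (a : ℕ) + 1 := by rw [hgdef]
    have hgns : g ∉ suppF y := by
      intro hgs
      obtain ⟨j'', ⟨h1, h2⟩, hgj⟩ := (hsuppA g).1 hgs
      rcases lt_trichotomy j'' ℓ with h | h | h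
      · have := ordlt j'' ℓ h1 h (by omega) g hgj a hamem
        omega
      · rw [h] at hgj
        have := Fin.le_def.1 ((A ℓ).le_max' g hgj)
        omega
      · rcases eq_or_lt_of_le (show ℓ + 1 ≤ j'' by omega) with h' | h'
        · rw [← h'] at hgj
          have := Fin.le_def.1 ((A (ℓ + 1)).min'_le g hgj)
          omega
        · have := ordlt (ℓ + 1) j'' (by omega) h' h2 b hbmem g hgj
          omega
    have hbi : (b : ℕ) ≤ (i : ℕ) := by
      rcases eq_or_lt_of_le hjℓ1 with h | h
      · rw [← h] at hij
        exact Fin.le_def.1 ((A (ℓ + 1)).min'_le i hij)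
      · exact le_of_lt (ordlt (ℓ + 1) j (by omega) h hjm b hbmem i hij)
    have hgi : (g : ℕ) < (i : ℕ) := by omega
    have hC'ne : (insert i C).Nonempty := Finset.insert_nonempty _ _
    have hle : (insert i C).inf' hC'ne w ≤ w g :=
      le_trans (Finset.inf'_le w (Finset.mem_insert_self i C))
        (hw.antitone (le_of_lt (Fin.lt_def.2 hgi)))
    have hmem := hval.2.2.1 hC'ne g hle
    rcases Finset.mem_union.1 hmem with h | h
    · rcases Finset.mem_union.1 h with h' | h'
      · exact hgns (hSsub (Finset.erase_subset _ _ h'))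
      · obtain ⟨j', ⟨hj'1, hj'ℓ⟩, hgB⟩ := (hmemN g).1 h'
        obtain ⟨b0, hb0⟩ := hAne j' (Finset.mem_Icc.2 ⟨hj'1, by omega⟩)
        have h1 := hBlt j' hj'1 (by omega) g hgB b0 hb0
        rcases eq_or_lt_of_le hj'ℓ with h2 | h2
        · rw [h2] at hb0
          have := Fin.le_def.1 ((A ℓ).le_max' b0 hb0)
          omega
        · have := ordlt j' ℓ hj'1 h2 (by omega) b0 hb0 a hamem
          omega
    · rcases Finset.mem_insert.1 h with h' | h'
      · have : (g : ℕ) = (i : ℕ) := congrArg Fin.val h'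
        omega
      · exact hgns (hCsub h')
end

section
/- For every i ∈ {k+1,…,d}, the set 𝒯_i is nonempty if and only if the binary vector v ∈ {0,1}^d with supp(v) = {i−k+1, i−k+2, …, i} belongs to K(w). -/
open Finset

/-- `𝒯_i := {y ∈ K(w) : |supp y| = k, supp y ⊆ {1,…,i}, i ∈ supp y}`. -/
def Tset (d k : ℕ) (w : Fin d → ℝ) (t : ℝ) (i : Fin d) : Set (Fin d → ℝ) :=
  {y | y ∈ Kset d k w t ∧ (suppF y).card = k ∧
       (∀ j ∈ suppF y, j ≤ i) ∧ i ∈ suppF y}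

/-- gap lemma for strictly monotone maps out of `Fin k` into `ℕ`. -/
lemma gap_lemma {k : ℕ} {g : Fin k → ℕ} (hg : StrictMono g) :
    ∀ n (a b : Fin k), (a : ℕ) + n = (b : ℕ) → g a + n ≤ g b := by
  intro n
  induction n with
  | zero =>
    intro a b h
    have : a = b := Fin.ext (by omega)
    simp [this]
  | succ n ih =>
    intro a b h
    have hb : (b : ℕ) - 1 < k := lt_trans (by omega) b.isLt
    have h1 := ih a ⟨(b : ℕ) - 1, hb⟩ (by simp; omega)
    have h2 : g ⟨(b : ℕ) - 1, hb⟩ < g b := hg (by simp [Fin.lt_def]; omega)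
    omega

/-- sums over a finset can be written via its order embedding. -/
lemma sum_emb {d k : ℕ} (w : Fin d → ℝ) (S : Finset (Fin d)) (h : S.card = k) :
    ∑ j ∈ S, w j = ∑ m : Fin k, w (S.orderEmbOfFin h m) := by
  have hS : S = Finset.image (S.orderEmbOfFin h) Finset.univ := by
    refine (Finset.eq_of_subset_of_card_le ?_ ?_).symm
    · intro j hj
      rcases Finset.mem_image.1 hj with ⟨m, _, rfl⟩
      exact S.orderEmbOfFin_mem h m
    · rw [Finset.card_image_of_injective _ (S.orderEmbOfFin h).injective]
      simp [h]
  conv_lhs => rw [hS]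
  rw [Finset.sum_image (fun a _ b _ hab => (S.orderEmbOfFin h).injective hab)]

/-- sum over support for 0/1 vectors. -/
lemma sum_supp {d : ℕ} (w : Fin d → ℝ) (x : Fin d → ℝ) (hx : ∀ i, x i = 0 ∨ x i = 1) :
    ∑ i, w i * x i = ∑ j ∈ suppF x, w j := by
  symm
  calc ∑ j ∈ suppF x, w j = ∑ j ∈ suppF x, w j * x j := by
        refine Finset.sum_congr rfl fun j hj => ?_
        have hne : x j ≠ 0 := by simpa [suppF] using hj
        rcases hx j with h | h
        · exact absurd h hne
        · simp [h]
    _ = ∑ i, w i * x i := by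
        refine Finset.sum_subset (Finset.subset_univ _) fun j _ hj => ?_
        have : x j = 0 := by
          by_contra hc
          exact hj (by simp [suppF, hc])
        simp [this]

theorem stmt_13 (d k : ℕ) (hk1 : 1 ≤ k) (hkd : k ≤ d)
    (w : Fin d → ℝ) (hw : StrictAnti w) (t : ℝ) :
    ∀ i : Fin d, k ≤ (i : ℕ) →
      ((Tset d k w t i).Nonempty ↔
        (fun j : Fin d =>
            if (i : ℕ) + 1 - k ≤ (j : ℕ) ∧ (j : ℕ) ≤ (i : ℕ) then (1 : ℝ) else 0)
          ∈ Kset d k w t) := by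
  intro i hki
  set v : Fin d → ℝ := fun j : Fin d =>
    if (i : ℕ) + 1 - k ≤ (j : ℕ) ∧ (j : ℕ) ≤ (i : ℕ) then (1 : ℝ) else 0 with hv
  -- the window map
  have hid : (i : ℕ) < d := i.isLt
  have hf_lt : ∀ m : Fin k, (i : ℕ) + 1 - k + (m : ℕ) < d := by
    intro m; have := m.isLt; omega
  set f : Fin k → Fin d := fun m => ⟨(i : ℕ) + 1 - k + (m : ℕ), hf_lt m⟩ with hfdef
  have hf_mono : StrictMono f := by
    intro a b hab
    simp only [hfdef, Fin.mk_lt_mk, Fin.lt_def] at *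
    omega
  -- supp v is the image of f
  have hsupp : suppF v = Finset.image f Finset.univ := by
    ext j
    simp only [suppF, Finset.mem_filter, Finset.mem_univ, true_and, Finset.mem_image, hv]
    constructor
    · intro h
      have hc : (i : ℕ) + 1 - k ≤ (j : ℕ) ∧ (j : ℕ) ≤ (i : ℕ) := by
        by_contra hc; exact h (if_neg hc)
      have hm : (j : ℕ) - ((i : ℕ) + 1 - k) < k := by omega
      exact ⟨⟨(j : ℕ) - ((i : ℕ) + 1 - k), hm⟩,
        by apply Fin.ext; simp [hfdef]; omega⟩
    · rintro ⟨m, -, rfl⟩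
      have hm := m.isLt
      have hcond : (i : ℕ) + 1 - k ≤ ((f m : Fin d) : ℕ) ∧ ((f m : Fin d) : ℕ) ≤ (i : ℕ) := by
        simp only [hfdef]; omega
      rw [if_pos hcond]; exact one_ne_zero
  have hcardv : (suppF v).card = k := by
    rw [hsupp, Finset.card_image_of_injective _ hf_mono.injective, Finset.card_univ,
      Fintype.card_fin]
  have hv01 : ∀ j, v j = 0 ∨ v j = 1 := by
    intro j
    by_cases h : (i : ℕ) + 1 - k ≤ (j : ℕ) ∧ (j : ℕ) ≤ (i : ℕ)
    · right; exact if_pos h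
    · left; exact if_neg h
  have hsumv : ∑ j, w j * v j = ∑ m : Fin k, w (f m) := by
    rw [sum_supp w v hv01, hsupp,
      Finset.sum_image (fun a _ b _ hab => hf_mono.injective hab)]
  constructor
  · -- forward: T_i nonempty → v ∈ K
    rintro ⟨y, ⟨hy01, hysum, -⟩, hycard, hysub, -⟩
    refine ⟨hv01, ?_, hcardv.le⟩
    have hsumy : ∑ j, w j * y j = ∑ m : Fin k, w ((suppF y).orderEmbOfFin hycard m) := by
      rw [sum_supp w y hy01, sum_emb w _ hycard]
    set e := (suppF y).orderEmbOfFin hycard with he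
    -- each e m ≤ f m (in index), so w (f m) ≤ w (e m)
    have key : ∀ m : Fin k, w (f m) ≤ w (e m) := by
      intro m
      have hmono : StrictMono (fun m : Fin k => ((e m : Fin d) : ℕ)) :=
        fun a b hab => by exact_mod_cast (Fin.lt_def.mp (e.strictMono hab))
      have hlast : k - 1 < k := by omega
      have hgap := gap_lemma hmono (k - 1 - (m : ℕ)) m ⟨k - 1, hlast⟩
        (by simp; have := m.isLt; omega)
      have hlast_le : ((e ⟨k - 1, hlast⟩ : Fin d) : ℕ) ≤ (i : ℕ) := by
        have := hysub (e ⟨k - 1, hlast⟩) ((suppF y).orderEmbOfFin_mem hycard _)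
        exact Fin.le_def.mp this
      have : ((e m : Fin d) : ℕ) ≤ (i : ℕ) + 1 - k + (m : ℕ) := by omega
      exact hw.antitone (Fin.le_def.mpr (by simpa [hfdef] using this))
    calc ∑ j, w j * v j = ∑ m : Fin k, w (f m) := hsumv
      _ ≤ ∑ m : Fin k, w (e m) := Finset.sum_le_sum fun m _ => key m
      _ = ∑ j, w j * y j := hsumy.symm
      _ < topSum d k w - t := hysum
  · -- backward: v ∈ K → v ∈ T_i
    intro hvK
    refine ⟨v, hvK, hcardv, ?_, ?_⟩
    · intro j hj
      have : v j ≠ 0 := by simpa [suppF] using hj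
      have hc : (i : ℕ) + 1 - k ≤ (j : ℕ) ∧ (j : ℕ) ≤ (i : ℕ) := by
        by_contra hc; exact this (if_neg hc)
      exact Fin.le_def.mpr hc.2
    · have : v i = 1 := by simp [hv]; omega
      simp [suppF, this]
end

section
/- Assume k < d. For all i, j ∈ {1,…,k−1} with j < i, if 𝒯'_i is nonempty then 𝒯'_j is nonempty. -/
open Finset

/-- `𝒯'_i := {y ∈ K(w) : |supp y| = k, {1,…,i} ⊆ supp y, i+1 ∉ supp y}`
(here `i` is a 1-indexed position, so `{1,…,i}` is `{j : (j : ℕ) < i}` and the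
`(i+1)`-st index is the `j : Fin d` with `(j : ℕ) = i`). -/
def Tset' (d k : ℕ) (w : Fin d → ℝ) (t : ℝ) (i : ℕ) : Set (Fin d → ℝ) :=
  {y | y ∈ Kset d k w t ∧ (suppF y).card = k ∧
       (∀ j : Fin d, (j : ℕ) < i → j ∈ suppF y) ∧
       ∀ j : Fin d, (j : ℕ) = i → j ∉ suppF y}

theorem stmt_16 (d k : ℕ) (hk1 : 1 ≤ k) (hkd : k < d)
    (w : Fin d → ℝ) (hw : StrictAnti w) (t : ℝ) :
    ∀ i j : ℕ, 1 ≤ j → j < i → i ≤ k - 1 →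
      (Tset' d k w t i).Nonempty → (Tset' d k w t j).Nonempty := by
  intro i j hj1 hji hik ⟨y, hymem, hycard, hylo, hyhi⟩
  obtain ⟨hy01, hysum, _⟩ := hymem
  have hjd : j < d := by omega
  have hid : i < d := by omega
  set jF : Fin d := ⟨j, hjd⟩
  set iF : Fin d := ⟨i, hid⟩
  have hne : jF ≠ iF := by
    intro h; apply_fun Fin.val at h; simp [jF, iF] at h; omega
  have hjS : jF ∈ suppF y := hylo jF (by simp [jF]; omega)
  have hiS : iF ∉ suppF y := hyhi iF rfl
  have hyj : y jF = 1 := by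
    rcases hy01 jF with h | h
    · exfalso; simp [suppF, h] at hjS
    · exact h
  have hyi : y iF = 0 := by
    by_contra h; exact hiS (by simp [suppF, h])
  set x : Fin d → ℝ := fun m => if m = jF then 0 else if m = iF then 1 else y m with hx
  have hx0 : x jF = 0 := by
    show (if jF = jF then (0:ℝ) else if jF = iF then 1 else y jF) = 0
    rw [if_pos rfl]
  have hx1 : x iF = 1 := by
    show (if iF = jF then (0:ℝ) else if iF = iF then 1 else y iF) = 1
    rw [if_neg (Ne.symm hne), if_pos rfl]
  have hxo : ∀ m : Fin d, m ≠ jF → m ≠ iF → x m = y m := by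
    intro m h1 h2
    show (if m = jF then (0:ℝ) else if m = iF then 1 else y m) = y m
    rw [if_neg h1, if_neg h2]
  have hxmem : ∀ m : Fin d, m ∈ suppF x ↔ x m ≠ 0 := by
    intro m; simp [suppF]
  have hymemS : ∀ m : Fin d, m ∈ suppF y ↔ y m ≠ 0 := by
    intro m; simp [suppF]
  have hsupp : suppF x = insert iF ((suppF y).erase jF) := by
    ext m
    by_cases h1 : m = jF
    · subst h1
      simp [hxmem, hx0, hne]
    · by_cases h2 : m = iF
      · subst h2
        simp [hxmem, hx1]
      · rw [hxmem, hxo m h1 h2, Finset.mem_insert, Finset.mem_erase, hymemS]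
        simp [h1, h2]
  refine ⟨x, ⟨⟨?_, ?_, ?_⟩, ?_, ?_, ?_⟩⟩
  · intro m
    by_cases h1 : m = jF
    · left; rw [h1, hx0]
    · by_cases h2 : m = iF
      · right; rw [h2, hx1]
      · rw [hxo m h1 h2]; exact hy01 m
  · have key : ∀ m : Fin d, w m * x m =
        w m * y m + ((if m = iF then w m else 0) - (if m = jF then w m else 0)) := by
      intro m
      by_cases h1 : m = jF
      · subst h1; rw [hx0, if_neg hne, if_pos rfl, hyj]; ring
      · by_cases h2 : m = iF
        · subst h2; rw [hx1, if_pos rfl, if_neg (Ne.symm hne), hyi]; ring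
        · rw [hxo m h1 h2, if_neg h2, if_neg h1]; ring
    rw [Finset.sum_congr rfl (fun m _ => key m), Finset.sum_add_distrib,
      Finset.sum_sub_distrib, Finset.sum_ite_eq' Finset.univ iF w,
      Finset.sum_ite_eq' Finset.univ jF w]
    simp only [Finset.mem_univ, if_true]
    have hwij : w iF < w jF := hw (by simp [jF, iF]; omega)
    linarith
  · rw [hsupp, Finset.card_insert_of_notMem (by simp [hiS, Finset.mem_erase]),
      Finset.card_erase_of_mem hjS, hycard]
    omega
  · rw [hsupp, Finset.card_insert_of_notMem (by simp [hiS, Finset.mem_erase]),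
      Finset.card_erase_of_mem hjS, hycard]
    omega
  · intro m hm
    have h1 : m ≠ jF := by intro h; subst h; simp [jF] at hm
    have h2 : m ≠ iF := by intro h; subst h; simp [iF] at hm; omega
    have := hylo m (by omega)
    rw [hxmem, hxo m h1 h2]
    rwa [hymemS] at this
  · intro m hm
    have h1 : m = jF := by apply Fin.ext; simpa [jF] using hm
    rw [hxmem, h1, hx0]
    simp
end
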